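/- L is a conservative extension of classical propositional logic: a propositional (□-free) formula φ is a theorem of L if and only if it is a classical tautology. -/

import Mathlib

/-- Formulas over variables ℕ with ⊥, →, ∨, ∧ and □. -/
inductive Fm : Type where
  | var : ℕ → Fm
  | bot : Fm
  | imp : Fm → Fm → Fm
  | or  : Fm → Fm → Fm
  | and : Fm → Fm → Fm
  | box : Fm → Fm
deriving DecidableEq

namespace Fm

def neg (φ : Fm) : Fm := imp φ bot
def top : Fm := neg bot
/-- Material biconditional φ ↔ ψ. -/
def biimp (φ ψ : Fm) : Fm := and (imp φ ψ) (imp ψ φ)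
/-- Strict equivalence φ ≡ ψ := □(φ→ψ) ∧ □(ψ→φ). -/
def eqv (φ ψ : Fm) : Fm := and (box (imp φ ψ)) (box (imp ψ φ))

/-- Simultaneous substitution. -/
def substAll (σ : ℕ → Fm) : Fm → Fm
  | var n => σ n
  | bot => bot
  | imp a b => imp (substAll σ a) (substAll σ b)
  | or a b => or (substAll σ a) (substAll σ b)
  | and a b => and (substAll σ a) (substAll σ b)
  | box a => box (substAll σ a)

/-- Substitution of ρ for the variable x. -/
def subst (x : ℕ) (ρ : Fm) (χ : Fm) : Fm :=
  substAll (fun n => if n = x then ρ else var n) χ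

/-- Formulas without the modal operator (propositional formulas). -/
def BoxFree : Fm → Prop
  | var _ => True
  | bot => True
  | imp a b => BoxFree a ∧ BoxFree b
  | or a b => BoxFree a ∧ BoxFree b
  | and a b => BoxFree a ∧ BoxFree b
  | box _ => False

end Fm

/-- Hilbert-style intuitionistic propositional calculus. -/
inductive IPC : Set Fm → Fm → Prop where
  | hyp {Φ φ} : φ ∈ Φ → IPC Φ φ
  | a1 {Φ} (φ ψ) : IPC Φ (.imp φ (.imp ψ φ))
  | a2 {Φ} (φ ψ χ) :
      IPC Φ (.imp (.imp φ (.imp ψ χ)) (.imp (.imp φ ψ) (.imp φ χ)))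
  | a3 {Φ} (φ ψ) : IPC Φ (.imp φ (.imp ψ (.and φ ψ)))
  | a4 {Φ} (φ ψ) : IPC Φ (.imp (.and φ ψ) φ)
  | a5 {Φ} (φ ψ) : IPC Φ (.imp (.and φ ψ) ψ)
  | a6 {Φ} (φ ψ) : IPC Φ (.imp φ (.or φ ψ))
  | a7 {Φ} (φ ψ) : IPC Φ (.imp ψ (.or φ ψ))
  | a8 {Φ} (φ ψ χ) :
      IPC Φ (.imp (.imp φ χ) (.imp (.imp ψ χ) (.imp (.or φ ψ) χ)))
  | a9 {Φ} (φ) : IPC Φ (.imp .bot φ)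
  | mp {Φ φ ψ} : IPC Φ (.imp φ ψ) → IPC Φ φ → IPC Φ ψ

/-- An intuitionistic propositional tautology or a substitution-instance thereof. -/
def IsIntAx (φ : Fm) : Prop :=
  ∃ (φ₀ : Fm) (σ : ℕ → Fm), φ₀.BoxFree ∧ IPC ∅ φ₀ ∧ φ = φ₀.substAll σ

/-- Axioms (i)-(iv) of the logic L. -/
inductive LAx : Fm → Prop where
  | i {φ} : IsIntAx φ → LAx φ
  | ii (φ) : LAx (.imp (.box φ) φ)
  | iii (φ ψ χ) :
      LAx (.imp (.box (.imp φ ψ)) (.imp (.box (.imp ψ χ)) (.box (.imp φ χ))))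
  | iv (φ ψ) : LAx (.imp (.box (.or φ ψ)) (.or (.box φ) (.box ψ)))

/-- Derivability in the modal logic L: axioms (i)-(iv), rules MP and Axiom
Necessitation, plus theorem schemes tertium non datur and SP. -/
inductive L : Set Fm → Fm → Prop where
  | hyp {Φ φ} : φ ∈ Φ → L Φ φ
  | ax {Φ φ} : LAx φ → L Φ φ
  | an {Φ φ} : LAx φ → L Φ (.box φ)
  | tnd {Φ} (φ) : L Φ (.or φ (Fm.neg φ))
  | sp {Φ} (φ ψ χ : Fm) (x : ℕ) :
      L Φ (.imp (Fm.eqv φ ψ) (Fm.eqv (χ.subst x φ) (χ.subst x ψ)))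
  | mp {Φ φ ψ} : L Φ (.imp φ ψ) → L Φ φ → L Φ ψ

/-- Classical truth-value evaluation of formulas (□ is ignored; it is only
used on □-free formulas). -/
def Fm.evalc (v : ℕ → Prop) : Fm → Prop
  | .var n => v n
  | .bot => False
  | .imp a b => a.evalc v → b.evalc v
  | .or a b => a.evalc v ∨ b.evalc v
  | .and a b => a.evalc v ∧ b.evalc v
  | .box a => a.evalc v

/-!
Soundness is proved in a model that is classical on the connectives and in which `□a` holds iff `a`
holds at every valuation and lies in `LAxChain`, the closure of the axioms of `L` under chaining
implications. The identity interpretation of `□` would not do: `χ.subst x φ` is `φ` with `χ`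
substituted for `x`, so SP asks `□` to be stable under substitution, and `LAxChain` is. It is also
prime: a disjunction in it is an instance of an intuitionistically provable disjunction, so by the
disjunction property of IPC (Kleene's slash) one disjunct is an axiom again; this validates (iv).
On □-free formulas the model is classical evaluation.

For completeness, every IPC axiom is an instance of a □-free one, so `L` contains IPC, and with
excluded middle Kalmár's lemma derives every tautology, one variable being eliminated at a time.
-/

namespace Fm

theorem substAll_substAll (σ τ : ℕ → Fm) (φ : Fm) :
    (φ.substAll τ).substAll σ = φ.substAll fun n => (τ n).substAll σ := by
  induction φ <;> simp only [substAll, *]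

theorem substAll_var (φ : Fm) : φ.substAll var = φ := by
  induction φ <;> simp only [substAll, *]

end Fm

open Fm

namespace IPC

variable {Γ Δ : Set Fm} {φ ψ χ : Fm}

theorem evalc (h : IPC Γ φ) {v : ℕ → Prop} (hΓ : ∀ ψ ∈ Γ, ψ.evalc v) : φ.evalc v := by
  induction h with
  | hyp hφ => exact hΓ _ hφ
  | mp _ _ ih₁ ih₂ => exact ih₁ ih₂
  | a1 => exact fun a _ => a
  | a2 => exact fun f g a => f a (g a)
  | a3 => exact And.intro
  | a4 => exact And.left
  | a5 => exact And.right
  | a6 => exact Or.inl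
  | a7 => exact Or.inr
  | a8 => exact fun f g h => h.elim f g
  | a9 => exact False.elim

theorem imp_self : IPC Γ (φ.imp φ) :=
  .mp (.mp (.a2 φ (φ.imp φ) φ) (.a1 φ (φ.imp φ))) (.a1 φ φ)

theorem imp_of_right (h : IPC Γ ψ) : IPC Γ (φ.imp ψ) :=
  .mp (.a1 ψ φ) h

theorem imp_of_subset_insert (h : IPC Δ φ) (hΔ : Δ ⊆ insert ψ Γ) : IPC Γ (ψ.imp φ) := by
  induction h with
  | hyp hφ =>
    rcases hΔ hφ with rfl | hφ
    · exact imp_self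
    · exact imp_of_right (.hyp hφ)
  | mp _ _ ih₁ ih₂ => exact .mp (.mp (.a2 ..) ih₁) ih₂
  | a1 => exact imp_of_right (.a1 ..)
  | a2 => exact imp_of_right (.a2 ..)
  | a3 => exact imp_of_right (.a3 ..)
  | a4 => exact imp_of_right (.a4 ..)
  | a5 => exact imp_of_right (.a5 ..)
  | a6 => exact imp_of_right (.a6 ..)
  | a7 => exact imp_of_right (.a7 ..)
  | a8 => exact imp_of_right (.a8 ..)
  | a9 => exact imp_of_right (.a9 ..)

theorem deduction (h : IPC (insert ψ Γ) φ) : IPC Γ (ψ.imp φ) :=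
  h.imp_of_subset_insert subset_rfl

theorem mono (h : IPC Γ φ) (hΓΔ : Γ ⊆ Δ) : IPC Δ φ :=
  .mp (h.imp_of_subset_insert (hΓΔ.trans (Set.subset_insert top Δ))) imp_self

theorem imp_trans (h₁ : IPC Γ (φ.imp ψ)) (h₂ : IPC Γ (ψ.imp χ)) : IPC Γ (φ.imp χ) :=
  deduction <| .mp (h₂.mono (Set.subset_insert _ _))
    (.mp (h₁.mono (Set.subset_insert _ _)) (.hyp (Set.mem_insert _ _)))

theorem or_elim (h : IPC Γ (φ.or ψ)) (h₁ : IPC (insert φ Γ) χ) (h₂ : IPC (insert ψ Γ) χ) :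
    IPC Γ χ :=
  .mp (.mp (.mp (.a8 φ ψ χ) (deduction h₁)) (deduction h₂)) h

theorem neg_imp (h₁ : IPC Γ φ) (h₂ : IPC Γ ψ.neg) : IPC Γ (φ.imp ψ).neg :=
  deduction <| .mp (h₂.mono (Set.subset_insert _ _))
    (.mp (.hyp (Set.mem_insert _ _)) (h₁.mono (Set.subset_insert _ _)))

/-- Every IPC axiom is an instance of a □-free IPC axiom, hence an axiom of `L`. -/
theorem toL {Ψ : Set Fm} (h : IPC Γ φ) (hΓ : ∀ ψ ∈ Γ, L Ψ ψ) : L Ψ φ := by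
  have ax {φ₀ : Fm} (h₀ : IPC ∅ φ₀) (hφ₀ : φ₀.BoxFree) (σ : ℕ → Fm) : L Ψ (φ₀.substAll σ) :=
    .ax (.i ⟨φ₀, σ, hφ₀, h₀, rfl⟩)
  induction h with
  | hyp hφ => exact hΓ _ hφ
  | mp _ _ ih₁ ih₂ => exact .mp ih₁ ih₂
  | a1 φ ψ => exact ax (.a1 (var 0) (var 1)) (by simp [BoxFree]) fun | 0 => φ | _ => ψ
  | a2 φ ψ χ =>
    exact ax (.a2 (var 0) (var 1) (var 2)) (by simp [BoxFree]) fun | 0 => φ | 1 => ψ | _ => χ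
  | a3 φ ψ => exact ax (.a3 (var 0) (var 1)) (by simp [BoxFree]) fun | 0 => φ | _ => ψ
  | a4 φ ψ => exact ax (.a4 (var 0) (var 1)) (by simp [BoxFree]) fun | 0 => φ | _ => ψ
  | a5 φ ψ => exact ax (.a5 (var 0) (var 1)) (by simp [BoxFree]) fun | 0 => φ | _ => ψ
  | a6 φ ψ => exact ax (.a6 (var 0) (var 1)) (by simp [BoxFree]) fun | 0 => φ | _ => ψ
  | a7 φ ψ => exact ax (.a7 (var 0) (var 1)) (by simp [BoxFree]) fun | 0 => φ | _ => ψ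
  | a8 φ ψ χ =>
    exact ax (.a8 (var 0) (var 1) (var 2)) (by simp [BoxFree]) fun | 0 => φ | 1 => ψ | _ => χ
  | a9 φ => exact ax (.a9 (var 0)) (by simp [BoxFree]) fun _ => φ

end IPC

/-- Atoms and boxed formulas are not IPC-provable, so they are never slashed. -/
def KleeneSlash : Fm → Prop
  | .var _ => False
  | .bot => False
  | .imp a b => IPC ∅ (a.imp b) ∧ (KleeneSlash a → KleeneSlash b)
  | .or a b => KleeneSlash a ∨ KleeneSlash b
  | .and a b => KleeneSlash a ∧ KleeneSlash b
  | .box _ => False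

theorem KleeneSlash.ipc {φ : Fm} (h : KleeneSlash φ) : IPC ∅ φ := by
  induction φ with
  | var | bot | box => exact h.elim
  | imp a b => exact h.1
  | or a b iha ihb =>
    exact h.elim (fun ha => .mp (.a6 a b) (iha ha)) fun hb => .mp (.a7 a b) (ihb hb)
  | and a b iha ihb => exact .mp (.mp (.a3 a b) (iha h.1)) (ihb h.2)

theorem IPC.kleeneSlash {φ : Fm} (h : IPC ∅ φ) : KleeneSlash φ := by
  induction h with
  | hyp h => exact h.elim
  | mp _ _ ih₁ ih₂ => exact ih₁.2 ih₂
  | a1 φ ψ => exact ⟨.a1 φ ψ, fun hφ => ⟨imp_of_right hφ.ipc, fun _ => hφ⟩⟩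
  | a2 φ ψ χ =>
    exact ⟨.a2 φ ψ χ, fun h₁ => ⟨.mp (.a2 φ ψ χ) h₁.1,
      fun h₂ => ⟨.mp (.mp (.a2 φ ψ χ) h₁.1) h₂.1, fun hφ => (h₁.2 hφ).2 (h₂.2 hφ)⟩⟩⟩
  | a3 φ ψ => exact ⟨.a3 φ ψ, fun hφ => ⟨.mp (.a3 φ ψ) hφ.ipc, fun hψ => ⟨hφ, hψ⟩⟩⟩
  | a4 φ ψ => exact ⟨.a4 φ ψ, And.left⟩
  | a5 φ ψ => exact ⟨.a5 φ ψ, And.right⟩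
  | a6 φ ψ => exact ⟨.a6 φ ψ, Or.inl⟩
  | a7 φ ψ => exact ⟨.a7 φ ψ, Or.inr⟩
  | a8 φ ψ χ =>
    exact ⟨.a8 φ ψ χ, fun h₁ => ⟨.mp (.a8 φ ψ χ) h₁.1,
      fun h₂ => ⟨.mp (.mp (.a8 φ ψ χ) h₁.1) h₂.1, fun h => h.elim h₁.2 h₂.2⟩⟩⟩
  | a9 φ => exact ⟨.a9 φ, False.elim⟩

theorem IPC.disjunction_property {φ ψ : Fm} (h : IPC ∅ (φ.or ψ)) : IPC ∅ φ ∨ IPC ∅ ψ :=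
  h.kleeneSlash.imp KleeneSlash.ipc KleeneSlash.ipc

theorem IPC.not_var (n : ℕ) : ¬IPC ∅ (var n) :=
  fun h => h.kleeneSlash

namespace IsIntAx

theorem substAll {φ : Fm} (h : IsIntAx φ) (σ : ℕ → Fm) : IsIntAx (φ.substAll σ) := by
  obtain ⟨φ₀, τ, hφ₀, h₀, rfl⟩ := h
  exact ⟨φ₀, fun n => (τ n).substAll σ, hφ₀, h₀, substAll_substAll σ τ φ₀⟩

theorem of_or {φ ψ : Fm} (h : IsIntAx (φ.or ψ)) : IsIntAx φ ∨ IsIntAx ψ := by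
  obtain ⟨φ₀, τ, hφ₀, h₀, h⟩ := h
  cases φ₀ with
  | var n => exact absurd h₀ (IPC.not_var n)
  | or α β =>
    obtain ⟨rfl, rfl⟩ := Fm.or.inj h
    exact h₀.disjunction_property.imp (fun hα => ⟨α, τ, hφ₀.1, hα, rfl⟩)
      (fun hβ => ⟨β, τ, hφ₀.2, hβ, rfl⟩)
  | _ => cases h

end IsIntAx

theorem LAx.substAll {φ : Fm} (h : LAx φ) (σ : ℕ → Fm) : LAx (φ.substAll σ) := by
  cases h with
  | i h => exact .i (h.substAll σ)
  | ii => exact .ii _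
  | iii => exact .iii ..
  | iv => exact .iv ..

inductive LAxChain : Fm → Prop where
  | ax {φ : Fm} : LAx φ → LAxChain φ
  | trans {φ ψ χ : Fm} : LAxChain (φ.imp ψ) → LAxChain (ψ.imp χ) → LAxChain (φ.imp χ)

namespace LAxChain

theorem substAll {φ : Fm} (h : LAxChain φ) (σ : ℕ → Fm) : LAxChain (φ.substAll σ) := by
  induction h with
  | ax h => exact .ax (h.substAll σ)
  | trans _ _ ih₁ ih₂ => exact .trans ih₁ ih₂

theorem isIntAx_or {φ ψ : Fm} (h : LAxChain (φ.or ψ)) : IsIntAx φ ∨ IsIntAx ψ := by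
  rcases h with ⟨⟨h⟩⟩
  exact h.of_or

end LAxChain

def Fm.Holds : Fm → (ℕ → Prop) → Prop
  | .var n, v => v n
  | .bot, _ => False
  | .imp a b, v => a.Holds v → b.Holds v
  | .or a b, v => a.Holds v ∨ b.Holds v
  | .and a b, v => a.Holds v ∧ b.Holds v
  | .box a, _ => LAxChain a ∧ ∀ w, a.Holds w

theorem Fm.holds_substAll_of_boxFree {φ : Fm} (hφ : φ.BoxFree) (σ : ℕ → Fm) (v : ℕ → Prop) :
    (φ.substAll σ).Holds v ↔ φ.evalc fun n => (σ n).Holds v := by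
  induction φ with
  | var | bot => exact Iff.rfl
  | imp a b iha ihb => exact imp_congr (iha hφ.1) (ihb hφ.2)
  | or a b iha ihb => exact or_congr (iha hφ.1) (ihb hφ.2)
  | and a b iha ihb => exact and_congr (iha hφ.1) (ihb hφ.2)
  | box => exact hφ.elim

theorem Fm.holds_iff_evalc_of_boxFree {φ : Fm} (hφ : φ.BoxFree) (v : ℕ → Prop) :
    φ.Holds v ↔ φ.evalc v := by
  have h := holds_substAll_of_boxFree hφ var v
  rwa [substAll_var] at h

theorem IsIntAx.holds {φ : Fm} (h : IsIntAx φ) (v : ℕ → Prop) : φ.Holds v := by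
  obtain ⟨φ₀, σ, hφ₀, h₀, rfl⟩ := h
  exact (holds_substAll_of_boxFree hφ₀ σ v).2 (h₀.evalc (by simp))

theorem LAx.holds {φ : Fm} (h : LAx φ) (v : ℕ → Prop) : φ.Holds v := by
  cases h with
  | i h => exact h.holds v
  | ii => exact fun h => h.2 v
  | iii => exact fun ⟨h₁, h₁'⟩ ⟨h₂, h₂'⟩ => ⟨.trans h₁ h₂, fun w hw => h₂' w (h₁' w hw)⟩
  | iv =>
    exact fun ⟨h, _⟩ => h.isIntAx_or.imp (fun hφ => ⟨.ax (.i hφ), hφ.holds⟩)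
      (fun hψ => ⟨.ax (.i hψ), hψ.holds⟩)

theorem LAxChain.holds {φ : Fm} (h : LAxChain φ) (v : ℕ → Prop) : φ.Holds v := by
  induction h generalizing v with
  | ax h => exact h.holds v
  | trans _ _ ih₁ ih₂ => exact fun h => ih₂ v (ih₁ v h)

theorem LAxChain.holds_box {φ : Fm} (h : LAxChain φ) (v : ℕ → Prop) : φ.box.Holds v :=
  ⟨h, h.holds⟩

theorem L.holds {Φ : Set Fm} {φ : Fm} (h : L Φ φ) {v : ℕ → Prop} (hΦ : ∀ ψ ∈ Φ, ψ.Holds v) :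
    φ.Holds v := by
  induction h with
  | hyp h => exact hΦ _ h
  | ax h => exact h.holds v
  | an h => exact (LAxChain.ax h).holds_box v
  | tnd φ => exact Classical.em _
  | sp φ ψ χ x =>
    let σ n := if n = x then χ else var n
    exact fun ⟨⟨h₁, _⟩, ⟨h₂, _⟩⟩ => ⟨(h₁.substAll σ).holds_box v, (h₂.substAll σ).holds_box v⟩
  | mp _ _ ih₁ ih₂ => exact ih₁ ih₂

namespace Fm

def vars : Fm → Finset ℕ
  | var n => {n}
  | bot => ∅
  | imp a b => a.vars ∪ b.vars
  | or a b => a.vars ∪ b.vars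
  | and a b => a.vars ∪ b.vars
  | box a => a.vars

open Classical in
noncomputable def signed (φ : Fm) (v : ℕ → Prop) : Fm :=
  if φ.evalc v then φ else φ.neg

theorem signed_of_evalc {φ : Fm} {v : ℕ → Prop} (h : φ.evalc v) : φ.signed v = φ := by
  simp [signed, h]

theorem signed_of_not_evalc {φ : Fm} {v : ℕ → Prop} (h : ¬φ.evalc v) :
    φ.signed v = φ.neg := by
  simp [signed, h]

theorem var_signed_update_of_ne {n x : ℕ} (h : n ≠ x) (v : ℕ → Prop) (p : Prop) :
    (var n).signed (Function.update v x p) = (var n).signed v := by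
  simp only [signed, evalc]
  split_ifs <;> simp_all

end Fm

namespace IPC

variable {Γ Δ : Set Fm} {φ : Fm}

/-- Kalmár's lemma. -/
theorem signed_of_boxFree {v : ℕ → Prop} (hφ : φ.BoxFree)
    (hvars : ∀ n ∈ φ.vars, IPC Γ ((var n).signed v)) : IPC Γ (φ.signed v) := by
  induction φ with
  | var n => exact hvars n (Finset.mem_singleton_self n)
  | bot =>
    rw [signed_of_not_evalc (φ := bot) id]
    exact imp_self
  | box => exact hφ.elim
  | imp a b iha ihb =>
    have ha := iha hφ.1 fun n hn => hvars n (Finset.mem_union_left _ hn)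
    have hb := ihb hφ.2 fun n hn => hvars n (Finset.mem_union_right _ hn)
    by_cases hbv : b.evalc v
    · rw [signed_of_evalc hbv] at hb
      rw [signed_of_evalc (φ := a.imp b) fun _ => hbv]
      exact imp_of_right hb
    by_cases hav : a.evalc v
    · rw [signed_of_evalc hav] at ha
      rw [signed_of_not_evalc hbv] at hb
      rw [signed_of_not_evalc (φ := a.imp b) fun h => hbv (h hav)]
      exact neg_imp ha hb
    · rw [signed_of_not_evalc hav] at ha
      rw [signed_of_evalc (φ := a.imp b) fun h => absurd h hav]
      exact imp_trans ha (.a9 b)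
  | or a b iha ihb =>
    have ha := iha hφ.1 fun n hn => hvars n (Finset.mem_union_left _ hn)
    have hb := ihb hφ.2 fun n hn => hvars n (Finset.mem_union_right _ hn)
    by_cases hav : a.evalc v
    · rw [signed_of_evalc hav] at ha
      rw [signed_of_evalc (φ := a.or b) (Or.inl hav)]
      exact .mp (.a6 a b) ha
    by_cases hbv : b.evalc v
    · rw [signed_of_evalc hbv] at hb
      rw [signed_of_evalc (φ := a.or b) (Or.inr hbv)]
      exact .mp (.a7 a b) hb
    · rw [signed_of_not_evalc hav] at ha
      rw [signed_of_not_evalc hbv] at hb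
      rw [signed_of_not_evalc (φ := a.or b) fun h => h.elim hav hbv]
      exact .mp (.mp (.a8 a b bot) ha) hb
  | and a b iha ihb =>
    have ha := iha hφ.1 fun n hn => hvars n (Finset.mem_union_left _ hn)
    have hb := ihb hφ.2 fun n hn => hvars n (Finset.mem_union_right _ hn)
    by_cases hav : a.evalc v
    swap
    · rw [signed_of_not_evalc hav] at ha
      rw [signed_of_not_evalc (φ := a.and b) fun h => hav h.1]
      exact imp_trans (.a4 a b) ha
    by_cases hbv : b.evalc v
    · rw [signed_of_evalc hav] at ha
      rw [signed_of_evalc hbv] at hb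
      rw [signed_of_evalc (φ := a.and b) ⟨hav, hbv⟩]
      exact .mp (.mp (.a3 a b) ha) hb
    · rw [signed_of_not_evalc hbv] at hb
      rw [signed_of_not_evalc (φ := a.and b) fun h => hbv h.2]
      exact imp_trans (.a5 a b) hb

theorem of_tautology_of_signed_vars_sdiff (hφ : φ.BoxFree) (htaut : ∀ v, φ.evalc v)
    (s : Finset ℕ) (hem : ∀ n, IPC Δ ((var n).or (var n).neg)) {v : ℕ → Prop}
    (hvars : ∀ n ∈ φ.vars \ s, IPC Δ ((var n).signed v)) : IPC Δ φ := by
  induction s using Finset.induction_on generalizing Δ v with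
  | empty =>
    rw [← signed_of_evalc (htaut v)]
    exact signed_of_boxFree hφ fun n hn => hvars n (by simpa using hn)
  | insert x s _ ih =>
    have branch (p : Prop) : IPC (insert ((var x).signed (Function.update v x p)) Δ) φ := by
      refine ih (fun n => (hem n).mono (Set.subset_insert _ _)) (v := Function.update v x p)
        fun n hn => ?_
      by_cases hnx : n = x
      · subst hnx
        exact .hyp (Set.mem_insert _ _)
      · rw [var_signed_update_of_ne hnx]
        exact (hvars n (by simp_all)).mono (Set.subset_insert _ _)
    have htrue : (var x).signed (Function.update v x True) = var x :=
      signed_of_evalc (by simp [Fm.evalc])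
    have hfalse : (var x).signed (Function.update v x False) = (var x).neg :=
      signed_of_not_evalc (by simp [Fm.evalc])
    exact or_elim (hem x) (htrue ▸ branch True) (hfalse ▸ branch False)

theorem of_tautology (hφ : φ.BoxFree) (htaut : ∀ v, φ.evalc v)
    (hem : ∀ n, IPC Γ ((var n).or (var n).neg)) : IPC Γ φ :=
  of_tautology_of_signed_vars_sdiff hφ htaut φ.vars hem (v := fun _ => False) (by simp)

end IPC

/-- L is a conservative extension of CPC: a □-free formula is a theorem of L
iff it is a classical tautology. -/
theorem L_conservative_over_CPC {φ : Fm} (hφ : φ.BoxFree) :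
    L ∅ φ ↔ ∀ v : ℕ → Prop, φ.evalc v := by
  constructor
  · intro h v
    exact (holds_iff_evalc_of_boxFree hφ v).1 (h.holds (by simp))
  · intro htaut
    have hipc : IPC {ψ | L ∅ ψ} φ := IPC.of_tautology hφ htaut fun n => .hyp (L.tnd _)
    exact hipc.toL fun _ => id
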